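/- arXiv:1405.7784 — 2 statements merged into one kernel-verified Lean document; each statement's English description precedes it below -/
import Mathlib

section
/- Let λ be a super-growing parameter for f(z) = λ e^z, i.e. there is c ∈ (0, |λ|] with α_{n+1} ≥ c e^{α_n} eventually, where β_n = f^n(0), α_n = Re β_n. Set D = c/(4|λ|) ≤ 1/4. Then there exists l₀ such that for all l ≥ l₀, the ball B(β_l, 2D|β_l|) contains exactly one point of the forward orbit {β_n : n ≥ 0}, namely β_l itself. -/
/-!
Since `‖β (n + 1)‖ = ‖λ‖ exp (Re β n)`, the super-growth `Re β (n + 1) ≥ c exp (Re β n) ≥ Re β n + log 2`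
makes `‖β n‖` at least double at every late step. Hence every other orbit point has norm at most
half or at least twice `‖β l‖` once `l` is large, while points of a ball around `β l` of radius
`2D‖β l‖ ≤ ‖β l‖ / 2` have norm strictly between these bounds.
-/

open Filter

lemma eventually_add_le_mul_exp {c : ℝ} (hc : 0 < c) (d : ℝ) :
    ∀ᶠ x in atTop, x + d ≤ c * Real.exp x := by
  filter_upwards [(Real.isLittleO_pow_exp_atTop (n := 1)).bound (half_pos hc),
    eventually_ge_atTop d] with x hx hd
  rw [pow_one, Real.norm_eq_abs, Real.norm_eq_abs, Real.abs_exp] at hx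
  linarith [le_abs_self x]

lemma norm_lt_two_mul_norm_of_dist_lt_half_norm {E : Type*} [SeminormedAddCommGroup E]
    {w z : E} (h : dist w z < ‖z‖ / 2) : ‖z‖ < 2 * ‖w‖ ∧ ‖w‖ < 2 * ‖z‖ := by
  rw [dist_eq_norm] at h
  have hz := norm_sub_norm_le z w
  have hw := norm_sub_norm_le w z
  rw [norm_sub_rev] at hz
  constructor <;> linarith [norm_nonneg (w - z)]

section Doubling

variable {u : ℕ → ℝ}

lemma two_mul_le_of_lt_of_doubling {N m n : ℕ} (hu : ∀ k ≥ N, 0 ≤ u k ∧ 2 * u k ≤ u (k + 1))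
    (hm : N ≤ m) (hmn : m < n) : 2 * u m ≤ u n := by
  induction n, hmn using Nat.le_induction with
  | base => exact (hu m hm).2
  | succ n hmn ih =>
    have := hu n (by omega)
    linarith

lemma eventually_separated_of_doubling (htend : Tendsto u atTop atTop)
    (hdouble : ∀ᶠ n in atTop, 2 * u n ≤ u (n + 1)) :
    ∀ᶠ l in atTop, ∀ n ≠ l, 2 * u n ≤ u l ∨ 2 * u l ≤ u n := by
  obtain ⟨N, hN⟩ := eventually_atTop.mp ((htend.eventually_ge_atTop 0).and hdouble)
  have hinit : ∀ᶠ l in atTop, ∀ n ∈ Set.Iio N, 2 * u n ≤ u l :=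
    (Set.finite_Iio N).eventually_all.2 fun n _ => htend.eventually_ge_atTop _
  filter_upwards [eventually_ge_atTop N, hinit] with l hl hinit n hne
  rcases hne.lt_or_gt with hnl | hln
  · left
    by_cases hn : N ≤ n
    · exact two_mul_le_of_lt_of_doubling hN hn hnl
    · exact hinit n (Set.mem_Iio.2 (by omega))
  · exact Or.inr (two_mul_le_of_lt_of_doubling hN hl hln)

end Doubling

lemma eventually_two_mul_norm_le_norm_succ {lam : ℂ} {c : ℝ} (hc : 0 < c) {β : ℕ → ℂ}
    (hstep : ∀ n, β (n + 1) = lam * Complex.exp (β n))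
    (htend : Tendsto (fun n => (β n).re) atTop atTop)
    (hsg : ∀ᶠ n in atTop, c * Real.exp (β n).re ≤ (β (n + 1)).re) :
    ∀ᶠ n in atTop, 2 * ‖β n‖ ≤ ‖β (n + 1)‖ := by
  have hnorm (n : ℕ) : ‖β (n + 1)‖ = ‖lam‖ * Real.exp (β n).re := by
    rw [hstep, norm_mul, Complex.norm_exp]
  rw [← map_add_atTop_eq_nat 1, eventually_map]
  filter_upwards [htend.eventually (eventually_add_le_mul_exp hc (Real.log 2)), hsg]
    with n hlog hsg
  calc 2 * ‖β (n + 1)‖ = ‖lam‖ * Real.exp ((β n).re + Real.log 2) := by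
        rw [hnorm, Real.exp_add, Real.exp_log two_pos]; ring
    _ ≤ ‖lam‖ * Real.exp (β (n + 1)).re := by gcongr; linarith
    _ = ‖β (n + 1 + 1)‖ := (hnorm _).symm

theorem stmt9_general (lam : ℂ) (c : ℝ) (hc : 0 < c)
    (hcle : c ≤ ‖lam‖)
    (β : ℕ → ℂ) (hβ : ∀ n, β n = (fun z => lam * Complex.exp z)^[n] 0)
    (htend : Tendsto (fun n => (β n).re) atTop atTop)
    (hsg : ∀ᶠ n in atTop, c * Real.exp ((β n).re) ≤ (β (n + 1)).re) :
    ∃ l₀ : ℕ, ∀ l ≥ l₀, ∀ n : ℕ,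
      β n ∈ Metric.ball (β l) (2 * (c / (4 * ‖lam‖)) * ‖β l‖) →
        β n = β l := by
  have hstep (n : ℕ) : β (n + 1) = lam * Complex.exp (β n) := by
    rw [hβ, hβ, Function.iterate_succ_apply']
  have hnorm_tend : Tendsto (fun n => ‖β n‖) atTop atTop :=
    tendsto_atTop_mono (fun n => Complex.re_le_norm _) htend
  obtain ⟨l₀, hl₀⟩ := eventually_atTop.mp <| eventually_separated_of_doubling hnorm_tend
    (eventually_two_mul_norm_le_norm_succ hc hstep htend hsg)
  refine ⟨l₀, fun l hl n hn => by_contra fun hne => ?_⟩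
  have hradius : 2 * (c / (4 * ‖lam‖)) * ‖β l‖ ≤ ‖β l‖ / 2 := by
    have : c / ‖lam‖ ≤ 1 := div_le_one_of_le₀ hcle (norm_nonneg _)
    calc 2 * (c / (4 * ‖lam‖)) * ‖β l‖ = c / ‖lam‖ * ‖β l‖ / 2 := by ring
      _ ≤ 1 * ‖β l‖ / 2 := by gcongr
      _ = ‖β l‖ / 2 := by ring
  obtain ⟨hlower, hupper⟩ :=
    norm_lt_two_mul_norm_of_dist_lt_half_norm ((Metric.mem_ball.mp hn).trans_le hradius)
  rcases hl₀ l hl n (fun h => hne (h ▸ rfl)) with h | h <;> linarith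

theorem stmt9 (lam : ℂ) (hlam : lam ≠ 0) (c : ℝ) (hc : 0 < c)
    (hcle : c ≤ ‖lam‖)
    (β : ℕ → ℂ) (hβ : ∀ n, β n = (fun z => lam * Complex.exp z)^[n] 0)
    (htend : Tendsto (fun n => (β n).re) atTop atTop)
    (hsg : ∀ᶠ n in atTop, c * Real.exp ((β n).re) ≤ (β (n + 1)).re) :
    ∃ l₀ : ℕ, ∀ l ≥ l₀, ∀ n : ℕ,
      β n ∈ Metric.ball (β l) (2 * (c / (4 * ‖lam‖)) * ‖β l‖) →
        β n = β l :=
  stmt9_general lam c hc hcle β hβ htend hsg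
end

section
/- Let C ⊂ ℝ² be an indecomposable metric continuum (with more than one point). Then the 1-dimensional Hausdorff measure restricted to C is not σ-finite; i.e., C cannot be written as a countable union of measurable sets each of finite H¹ measure. -/
/-!
The composants of an indecomposable continuum are pairwise disjoint, and by boundary bumping each
one is a connected set with more than one point, hence of positive `H¹`-measure. Each composant is
also a countable union of closed proper subcontinua (components of complements of basic open
sets), so it is Borel. For an s-finite measure only countably many disjoint measurable sets have
positive measure, so there would be only countably many composants, and the continuum would be a
countable union of closed proper subcontinua. By Baire one of them would have interior, but
proper subcontinua of an indecomposable continuum are nowhere dense.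
-/

open MeasureTheory Set TopologicalSpace

section Continuum

variable {X : Type*} [TopologicalSpace X]

structure IsProperSubcontinuum (K : Set X) : Prop where
  isClosed : IsClosed K
  isConnected : IsConnected K
  ne_univ : K ≠ univ

variable (X) in
def IsIndecomposable : Prop :=
  ∀ A B : Set X, IsProperSubcontinuum A → IsProperSubcontinuum B → A ∪ B ≠ univ

def composant (p : X) : Set X :=
  ⋃₀ {K | IsProperSubcontinuum K ∧ p ∈ K}

lemma IsProperSubcontinuum.subset_composant {K : Set X} (hK : IsProperSubcontinuum K) {p : X}
    (hp : p ∈ K) : K ⊆ composant p :=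
  subset_sUnion_of_mem ⟨hK, hp⟩

lemma isPreconnected_composant (p : X) : IsPreconnected (composant p) :=
  isPreconnected_sUnion p _ (fun _ hK => hK.2) fun _ hK => hK.1.isConnected.isPreconnected

lemma mem_composant_self [T1Space X] [Nontrivial X] (p : X) : p ∈ composant p :=
  IsProperSubcontinuum.subset_composant
    ⟨isClosed_singleton, isConnected_singleton, singleton_ne_univ p⟩ rfl rfl

lemma IsClosed.isClosed_connectedComponentIn {F : Set X} (hF : IsClosed F) (p : X) :
    IsClosed (connectedComponentIn F p) := by
  by_cases hp : p ∈ F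
  · exact closure_subset_iff_isClosed.1 <| isPreconnected_connectedComponentIn.closure
      |>.subset_connectedComponentIn (subset_closure (mem_connectedComponentIn hp))
        (hF.closure_subset_iff.2 (connectedComponentIn_subset F p))
  · simp [connectedComponentIn_eq_empty hp]

lemma IsClosed.isProperSubcontinuum_connectedComponentIn {F : Set X} (hF : IsClosed F)
    (hF_ne : F ≠ univ) {p : X} (hp : p ∈ F) : IsProperSubcontinuum (connectedComponentIn F p) :=
  ⟨hF.isClosed_connectedComponentIn p, isConnected_connectedComponentIn_iff.2 hp,
    fun h => hF_ne (eq_univ_of_univ_subset (h ▸ connectedComponentIn_subset F p))⟩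

lemma IsClosed.connectedComponentIn_subset_composant {F : Set X} (hF : IsClosed F)
    (hF_ne : F ≠ univ) (p : X) : connectedComponentIn F p ⊆ composant p := by
  by_cases hp : p ∈ F
  · exact (hF.isProperSubcontinuum_connectedComponentIn hF_ne hp).subset_composant
      (mem_connectedComponentIn hp)
  · simp [connectedComponentIn_eq_empty hp]

lemma composant_eq_iUnion_countableBasis [SecondCountableTopology X] (p : X) :
    composant p = ⋃ U : countableBasis X, connectedComponentIn (U : Set X)ᶜ p := by
  refine Subset.antisymm ?_ (iUnion_subset fun U => ?_)
  · rintro y ⟨K, ⟨hK, hpK⟩, hyK⟩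
    obtain ⟨z, hz⟩ := nonempty_compl.2 hK.ne_univ
    obtain ⟨U, hU, -, hUK⟩ :=
      (isBasis_countableBasis X).exists_subset_of_mem_open hz hK.isClosed.isOpen_compl
    exact mem_iUnion.2 ⟨⟨U, hU⟩, hK.isConnected.isPreconnected.subset_connectedComponentIn hpK
      (subset_compl_comm.1 hUK) hyK⟩
  · exact (isOpen_of_mem_countableBasis U.2).isClosed_compl.connectedComponentIn_subset_composant
      (compl_ne_univ.2 (nonempty_of_mem_countableBasis U.2)) p

lemma measurableSet_composant [SecondCountableTopology X] [MeasurableSpace X]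
    [OpensMeasurableSpace X] (p : X) : MeasurableSet (composant p) := by
  rw [composant_eq_iUnion_countableBasis]
  exact .iUnion fun U => (isOpen_of_mem_countableBasis U.2).isClosed_compl
    |>.isClosed_connectedComponentIn p |>.measurableSet

lemma IsIndecomposable.isProperSubcontinuum_union (hX : IsIndecomposable X) {K L : Set X}
    (hK : IsProperSubcontinuum K) (hL : IsProperSubcontinuum L) (hKL : (K ∩ L).Nonempty) :
    IsProperSubcontinuum (K ∪ L) :=
  ⟨hK.isClosed.union hL.isClosed, IsConnected.union hKL hK.isConnected hL.isConnected, hX K L hK hL⟩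

lemma IsIndecomposable.composant_subset_of_mem (hX : IsIndecomposable X) {p q r : X}
    (hp : r ∈ composant p) (hq : r ∈ composant q) : composant p ⊆ composant q := by
  obtain ⟨K, ⟨hK, hpK⟩, hrK⟩ := hp
  obtain ⟨L, ⟨hL, hqL⟩, hrL⟩ := hq
  rintro y ⟨M, ⟨hM, hpM⟩, hyM⟩
  have hMKL := hX.isProperSubcontinuum_union
    (hX.isProperSubcontinuum_union hM hK ⟨p, hpM, hpK⟩) hL ⟨r, .inr hrK, hrL⟩
  exact hMKL.subset_composant (.inr hqL) (.inl (.inl hyM))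

lemma IsIndecomposable.pairwise_disjoint_composant (hX : IsIndecomposable X) :
    Pairwise (Function.onFun Disjoint ((↑) : range (composant (X := X)) → Set X)) := by
  rintro ⟨_, p, rfl⟩ ⟨_, q, rfl⟩ hpq
  refine disjoint_left.2 fun r hp hq => hpq (Subtype.ext ?_)
  exact (hX.composant_subset_of_mem hp hq).antisymm (hX.composant_subset_of_mem hq hp)

/-- Off `K`, the closed set `P` coincides with the open set `u`, so a piece of `K ∪ P` that is
separated from `K` is clopen. -/
lemma isPreconnected_union_of_diff_subset [PreconnectedSpace X] {K P u : Set X}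
    (hK : IsClosed K) (hK_conn : IsPreconnected K) (hK_ne : K.Nonempty) (hP : IsClosed P)
    (hu : IsOpen u) (hPu : P ⊆ u) (huP : u \ K ⊆ P) : IsPreconnected (K ∪ P) := by
  have absorb : ∀ t t', IsClosed t → IsClosed t' → K ∪ P ⊆ t ∪ t' →
      (K ∪ P) ∩ (t ∩ t') = ∅ → K ⊆ t → K ∪ P ⊆ t := by
    intro t t' ht ht' hcov hdisj hKt
    have hS : (K ∪ P) ∩ t' = u \ (K ∪ t) := by
      ext y
      constructor
      · rintro ⟨hy, hyt'⟩
        have hyt : y ∉ t := fun hyt => (hdisj ▸ ⟨hy, hyt, hyt'⟩ : y ∈ (∅ : Set X))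
        have hyK : y ∉ K := fun hyK => hyt (hKt hyK)
        exact ⟨hPu (hy.resolve_left hyK), fun h => h.elim hyK hyt⟩
      · rintro ⟨hyu, hyKt⟩
        have hy : y ∈ K ∪ P := .inr (huP ⟨hyu, fun h => hyKt (.inl h)⟩)
        exact ⟨hy, (hcov hy).resolve_left fun h => hyKt (.inr h)⟩
    have hclopen : IsClopen ((K ∪ P) ∩ t') :=
      ⟨(hK.union hP).inter ht', hS ▸ hu.sdiff (hK.union ht)⟩
    rcases isClopen_iff.1 hclopen with h | h
    · exact fun y hy => (hcov hy).resolve_right fun hyt' => (h ▸ ⟨hy, hyt'⟩ : y ∈ (∅ : Set X))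
    · obtain ⟨k, hk⟩ := hK_ne
      exact absurd (.inl hk) (hS ▸ h ▸ mem_univ k : k ∈ u \ (K ∪ t)).2
  rw [isPreconnected_iff_subset_of_disjoint_closed]
  intro t t' ht ht' hcov hdisj
  have hKdisj : K ∩ (t ∩ t') = ∅ :=
    subset_empty_iff.1 (hdisj ▸ inter_subset_inter_left _ subset_union_left)
  rcases isPreconnected_iff_subset_of_disjoint_closed.1 hK_conn t t' ht ht'
      (subset_union_left.trans hcov) hKdisj with hKt | hKt
  · exact .inl (absorb t t' ht ht' hcov hdisj hKt)
  · exact .inr (absorb t' t ht' ht (union_comm t t' ▸ hcov) (inter_comm t t' ▸ hdisj) hKt)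

lemma IsIndecomposable.interior_eq_empty [ConnectedSpace X] (hX : IsIndecomposable X)
    {K : Set X} (hK : IsProperSubcontinuum K) : interior K = ∅ := by
  by_contra hint
  set B := closure Kᶜ with hB
  have hK_ne : K.Nonempty := (nonempty_iff_ne_empty.2 hint).mono interior_subset
  have hKB : K ∪ B = univ :=
    univ_subset_iff.1 ((union_compl_self K).ge.trans (union_subset_union_right K subset_closure))
  have hB_ne : B ≠ univ := by rwa [hB, closure_compl, Ne, compl_univ_iff]
  by_cases hB_conn : IsPreconnected B
  · exact hX K B hK
      ⟨isClosed_closure, ⟨(nonempty_compl.2 hK.ne_univ).mono subset_closure, hB_conn⟩, hB_ne⟩ hKB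
  have piece : ∀ t t', IsClosed t → IsClosed t' → B ⊆ t ∪ t' → B ∩ (t ∩ t') = ∅ → ¬B ⊆ t →
      IsProperSubcontinuum (K ∪ B ∩ t) := by
    intro t t' ht ht' hcov hdisj hBt
    refine ⟨hK.isClosed.union (isClosed_closure.inter ht),
      ⟨hK_ne.mono subset_union_left, isPreconnected_union_of_diff_subset hK.isClosed
        hK.isConnected.isPreconnected hK_ne (isClosed_closure.inter ht) ht'.isOpen_compl ?_ ?_⟩, ?_⟩
    · exact fun y hy hyt' => (hdisj ▸ ⟨hy.1, hy.2, hyt'⟩ : y ∈ (∅ : Set X))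
    · exact fun y ⟨hyt', hyK⟩ =>
        ⟨subset_closure hyK, (hcov (subset_closure hyK)).resolve_right hyt'⟩
    · obtain ⟨y, hyK, hyt⟩ := (closure_inter_open_nonempty_iff ht.isOpen_compl).1
        (not_subset.1 hBt)
      exact fun h => (h ▸ mem_univ y : y ∈ K ∪ B ∩ t).elim hyK fun hy => hyt hy.2
  rw [isPreconnected_iff_subset_of_disjoint_closed] at hB_conn
  push Not at hB_conn
  obtain ⟨t, t', ht, ht', hcov, hdisj, hBt, hBt'⟩ := hB_conn
  refine hX _ _ (piece t t' ht ht' hcov hdisj hBt)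
    (piece t' t ht' ht (union_comm t t' ▸ hcov) (inter_comm t t' ▸ hdisj) hBt') ?_
  rw [← union_union_distrib_left, ← inter_union_distrib_left, inter_eq_left.2 hcov, hKB]

lemma exists_isClopen_subset_of_connectedComponent_subset [CompactSpace X] [T2Space X] {x : X}
    {U : Set X} (hU : IsOpen U) (h : connectedComponent x ⊆ U) :
    ∃ V, IsClopen V ∧ x ∈ V ∧ V ⊆ U := by
  rw [connectedComponent_eq_iInter_isClopen] at h
  obtain ⟨t, ht⟩ := hU.isClosed_compl.isCompact.elim_finite_subfamily_closed _
    (fun s => s.2.1.isClosed) (disjoint_iff_inter_eq_empty.1 (disjoint_compl_left_iff_subset.2 h))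
  exact ⟨⋂ s ∈ t, s, isClopen_biInter_finset fun s _ => s.2.1, mem_iInter₂.2 fun s _ => s.2.2,
    disjoint_compl_left_iff_subset.1 (disjoint_iff_inter_eq_empty.2 ht)⟩

theorem IsClosed.connectedComponentIn_inter_frontier_nonempty [CompactSpace X] [T2Space X]
    [ConnectedSpace X] {F : Set X} (hF : IsClosed F) (hF_ne : F ≠ univ) {p : X} (hp : p ∈ F) :
    (connectedComponentIn F p ∩ frontier F).Nonempty := by
  by_contra hempty
  have hint : connectedComponentIn F p ⊆ interior F := fun y hy =>
    self_sdiff_frontier F ▸ ⟨connectedComponentIn_subset F p hy, fun hyF => hempty ⟨y, hy, hyF⟩⟩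
  have : CompactSpace F := isCompact_iff_compactSpace.1 hF.isCompact
  obtain ⟨V, hV, hpV, hV_int⟩ := exists_isClopen_subset_of_connectedComponent_subset (x := ⟨p, hp⟩)
    (isOpen_interior.preimage continuous_subtype_val)
    (image_subset_iff.1 (connectedComponentIn_eq_image hp ▸ hint))
  obtain ⟨W, hW, rfl⟩ := isOpen_induced_iff.1 hV.isOpen
  have hWF : W ∩ interior F = Subtype.val '' (Subtype.val ⁻¹' W : Set F) := by
    rw [Subtype.image_preimage_coe]
    exact Subset.antisymm (fun y hy => ⟨interior_subset hy.2, hy.1⟩)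
      fun y hy => ⟨hy.2, hV_int (a := ⟨y, hy.1⟩) hy.2⟩
  have hclopen : IsClopen (W ∩ interior F) :=
    ⟨hWF ▸ hF.isClosedEmbedding_subtypeVal.isClosedMap _ hV.isClosed, hW.inter isOpen_interior⟩
  rcases isClopen_iff.1 hclopen with h | h
  · exact (h ▸ ⟨hpV, hV_int hpV⟩ : p ∈ (∅ : Set X))
  · exact hF_ne (univ_subset_iff.1 (h ▸ inter_subset_right.trans interior_subset))

lemma exists_ne_mem_composant [CompactSpace X] [T2Space X] [ConnectedSpace X] [Nontrivial X]
    (p : X) : ∃ y ∈ composant p, y ≠ p := by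
  obtain ⟨a, hap⟩ := exists_ne p
  obtain ⟨u, v, hu, hv, hau, hpv, huv⟩ := t2_separation hap
  have hF_ne : uᶜ ≠ univ := compl_ne_univ.2 ⟨a, hau⟩
  obtain ⟨y, hy, hy_fr⟩ := hu.isClosed_compl.connectedComponentIn_inter_frontier_nonempty hF_ne
    (disjoint_right.1 huv hpv)
  refine ⟨y, hu.isClosed_compl.connectedComponentIn_subset_composant hF_ne p hy, ?_⟩
  rintro rfl
  rw [frontier_compl] at hy_fr
  exact disjoint_left.1 (huv.closure_left hv) (frontier_subset_closure hy_fr) hpv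

lemma IsIndecomposable.iUnion_composant_ne_univ [CompactSpace X] [T2Space X] [ConnectedSpace X]
    [SecondCountableTopology X] (hX : IsIndecomposable X) {ι : Type*} [Countable ι] (f : ι → X) :
    ⋃ i, composant (f i) ≠ univ := by
  intro hcov
  simp_rw [composant_eq_iUnion_countableBasis] at hcov
  rw [← iUnion_prod' fun j : ι × countableBasis X => connectedComponentIn (j.2 : Set X)ᶜ (f j.1)]
    at hcov
  obtain ⟨⟨i, U⟩, hint⟩ := nonempty_interior_of_iUnion_of_closed
    (fun j => (isOpen_of_mem_countableBasis j.2.2).isClosed_compl.isClosed_connectedComponentIn _)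
    hcov
  have hK := (isOpen_of_mem_countableBasis U.2).isClosed_compl
    |>.isProperSubcontinuum_connectedComponentIn
      (compl_ne_univ.2 (nonempty_of_mem_countableBasis U.2))
      (connectedComponentIn_nonempty_iff.1 (hint.mono interior_subset))
  exact hint.ne_empty (hX.interior_eq_empty hK)

end Continuum

lemma ofReal_dist_le_hausdorffMeasure_one {X : Type*} [MetricSpace X] [MeasurableSpace X]
    [BorelSpace X] {A : Set X} (hA : IsPreconnected A) {a b : X} (ha : a ∈ A) (hb : b ∈ A) :
    ENNReal.ofReal (dist b a) ≤ μH[1] A := by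
  have hf : Continuous (dist · a) := continuous_id.dist continuous_const
  have hIcc : Icc 0 (dist b a) ⊆ (dist · a) '' A := by
    simpa only [dist_self] using hA.intermediate_value ha hb hf.continuousOn
  calc ENNReal.ofReal (dist b a) = μH[1] (Icc 0 (dist b a)) := by
        rw [hausdorffMeasure_real, Real.volume_Icc, sub_zero]
    _ ≤ μH[1] ((dist · a) '' A) := measure_mono hIcc
    _ ≤ μH[1] A := by
        simpa using (LipschitzWith.dist_left a).hausdorffMeasure_image_le zero_le_one A

theorem IsIndecomposable.not_sFinite_hausdorffMeasure_one {X : Type*} [MetricSpace X]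
    [CompactSpace X] [ConnectedSpace X] [Nontrivial X] [MeasurableSpace X] [BorelSpace X]
    (hX : IsIndecomposable X) : ¬SFinite (μH[1] : Measure X) := by
  intro hμ
  have hpos : ∀ p : X, 0 < μH[1] (composant p) := fun p => by
    obtain ⟨y, hy, hyp⟩ := exists_ne_mem_composant p
    exact (ENNReal.ofReal_pos.2 (dist_pos.2 hyp)).trans_le
      (ofReal_dist_le_hausdorffMeasure_one (isPreconnected_composant p) (mem_composant_self p) hy)
  have hcount : Countable (range (composant (X := X))) := by
    have := Measure.countable_meas_pos_of_disjoint_iUnion (μ := μH[1])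
      (fun ⟨_, p, rfl⟩ => measurableSet_composant p) hX.pairwise_disjoint_composant
    have hall : {E : range (composant (X := X)) | 0 < μH[1] (E : Set X)} = univ :=
      eq_univ_of_forall fun ⟨_, p, rfl⟩ => hpos p
    rw [hall] at this
    exact countable_univ_iff.1 this
  choose rep hrep using fun E : range (composant (X := X)) => E.2
  exact hX.iUnion_composant_ne_univ rep
    (eq_univ_of_forall fun q => mem_iUnion.2 ⟨⟨_, q, rfl⟩, (hrep _).symm ▸ mem_composant_self q⟩)

lemma isIndecomposable_coe {Y : Type*} [TopologicalSpace Y] {C : Set Y} (hC : IsCompact C)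
    (hind : ¬∃ A B : Set Y, A ⊆ C ∧ B ⊆ C ∧ IsCompact A ∧ IsConnected A ∧
        IsCompact B ∧ IsConnected B ∧ A ≠ C ∧ B ≠ C ∧ A ∪ B = C) :
    IsIndecomposable C := by
  have : CompactSpace C := isCompact_iff_compactSpace.1 hC
  have coe_image : ∀ {K : Set C}, IsProperSubcontinuum K →
      IsCompact (Subtype.val '' K) ∧ IsConnected (Subtype.val '' K) ∧ Subtype.val '' K ≠ C :=
    fun hK => ⟨hK.isClosed.isCompact.image continuous_subtype_val,
      hK.isConnected.image _ continuous_subtype_val.continuousOn,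
      fun h => hK.ne_univ <| Subtype.val_injective.image_injective <|
        h.trans (Subtype.coe_image_univ C).symm⟩
  intro A B hA hB hAB
  obtain ⟨hA_cpt, hA_conn, hA_ne⟩ := coe_image hA
  obtain ⟨hB_cpt, hB_conn, hB_ne⟩ := coe_image hB
  exact hind ⟨_, _, Subtype.coe_image_subset C A, Subtype.coe_image_subset C B, hA_cpt, hA_conn,
    hB_cpt, hB_conn, hA_ne, hB_ne, by rw [← image_union, hAB, Subtype.coe_image_univ]⟩

theorem stmt14 (C : Set ℂ) (hC : IsCompact C) (hconn : IsConnected C)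
    (hnt : C.Nontrivial)
    (hind : ¬∃ A B : Set ℂ, A ⊆ C ∧ B ⊆ C ∧ IsCompact A ∧ IsConnected A ∧
        IsCompact B ∧ IsConnected B ∧ A ≠ C ∧ B ≠ C ∧ A ∪ B = C) :
    ¬∃ s : ℕ → Set ℂ, (∀ n, MeasurableSet (s n)) ∧ (∀ n, s n ⊆ C) ∧
        C = ⋃ n, s n ∧ ∀ n, μH[1] (s n) < ⊤ := by
  rintro ⟨s, -, -, hCs, hs_fin⟩
  have : CompactSpace C := isCompact_iff_compactSpace.1 hC
  have : ConnectedSpace C := isConnected_iff_connectedSpace.1 hconn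
  have : Nontrivial C := nontrivial_coe_sort.2 hnt
  have : SigmaFinite (μH[1] : Measure C) := by
    refine Measure.sigmaFinite_of_countable (countable_range fun n => (↑) ⁻¹' s n)
      (forall_mem_range.2 fun n => ?_) ?_
    · rw [isometry_subtype_coe.hausdorffMeasure_preimage (.inl zero_le_one)]
      exact (measure_mono inter_subset_left).trans_lt (hs_fin n)
    · rw [sUnion_range, ← preimage_iUnion, ← hCs, Subtype.coe_preimage_self]
  exact (isIndecomposable_coe hC hind).not_sFinite_hausdorffMeasure_one inferInstance
end
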